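/- Let V be a finite-dimensional real vector space with a (possibly degenerate) skew-symmetric bilinear form σ, and suppose V = E ⊕ F where both E and F are isotropic subspaces (σ vanishes identically on E×E and on F×F) and F intersects the kernel of σ trivially. Let W be a linear subspace of End(V) such that every A ∈ W annihilates E and maps F into E, and such that W contains no nonzero element of rank ≤ 1. Let φ : V → W be a linear map satisfying φ(a)b = φ(b)a for all a,b ∈ V (i.e., φ lies in the standard first prolongation W^{(1)}). If φ has rank ≤ 1 as a linear map from V to the vector space W, i.e., there exist a linear functional α on V and A₀ ∈ W with φ(u) = α(u)·A₀ for all u ∈ V, then φ = 0. (Thus the standard first prolongation of W again contains no nonzero elements of rank 1, so the construction can be iterated and all higher modified prolongations of W coincide with the standard ones.) -/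

import Mathlib

/-! Symmetry `φ(a)b = φ(b)a` of `φ = α ⊗ A₀` gives `α(a) A₀ b = α(b) A₀ a`; normalising `α(c) = 1`
shows `A₀ b = α(b) A₀ c`, so `A₀` has rank at most one and hence vanishes in `W`. -/

open Module

namespace LinearMap

lemma apply_eq_smul_of_symm_of_eq_smul {R M N : Type*} [CommSemiring R] [AddCommMonoid M]
    [Module R M] [AddCommMonoid N] [Module R N] {φ : M →ₗ[R] M →ₗ[R] N}
    (hsym : ∀ a b, φ a b = φ b a) {α : M →ₗ[R] R} {A : M →ₗ[R] N} (hφ : ∀ u, φ u = α u • A)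
    {c : M} (hc : α c = 1) (b : M) :
    A b = α b • A c := by
  simpa [hφ, hc] using hsym c b

lemma finrank_range_le_one_of_forall_apply_eq_smul {R M N : Type*} [Ring R]
    [StrongRankCondition R] [AddCommGroup M] [Module R M] [AddCommGroup N] [Module R N]
    {A : M →ₗ[R] N} {α : M → R} {c : M} (h : ∀ b, A b = α b • A c) :
    finrank R (range A) ≤ 1 :=
  finrank_le_one ⟨A c, mem_range_self A c⟩ fun ⟨_, b, hb⟩ ↦ ⟨α b, by ext; simp [← hb, h b]⟩

variable {K M N : Type*} [Field K] [AddCommGroup M] [Module K M] [AddCommGroup N] [Module K N]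

lemma eq_zero_or_finrank_range_le_one_of_symm_of_eq_smul {φ : M →ₗ[K] M →ₗ[K] N}
    (hsym : ∀ a b, φ a b = φ b a) {α : M →ₗ[K] K} {A : M →ₗ[K] N} (hφ : ∀ u, φ u = α u • A) :
    α = 0 ∨ finrank K (range A) ≤ 1 := by
  refine or_iff_not_imp_left.2 fun hα ↦ ?_
  obtain ⟨c, hc⟩ := surjective_of_ne_zero hα 1
  exact finrank_range_le_one_of_forall_apply_eq_smul (apply_eq_smul_of_symm_of_eq_smul hsym hφ hc)

end LinearMap

theorem stmt_6 (V : Type*) [AddCommGroup V] [Module ℝ V]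
    (W : Submodule ℝ (V →ₗ[ℝ] V))
    (hrank : ∀ A ∈ W, Module.finrank ℝ (LinearMap.range A) ≤ 1 → A = 0)
    (φ : V →ₗ[ℝ] (V →ₗ[ℝ] V))
    (hsym : ∀ a b : V, φ a b = φ b a)
    (α : V →ₗ[ℝ] ℝ) (A₀ : V →ₗ[ℝ] V) (hA₀ : A₀ ∈ W)
    (hφrk : ∀ u : V, φ u = α u • A₀) :
    φ = 0 := by
  have hα_or_hA₀ : α = 0 ∨ A₀ = 0 :=
    (LinearMap.eq_zero_or_finrank_range_le_one_of_symm_of_eq_smul hsym hφrk).imp_right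
      (hrank A₀ hA₀)
  ext u : 1
  rcases hα_or_hA₀ with rfl | rfl <;> simp [hφrk]
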